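/- arXiv:1307.7544 — 2 statements merged into one kernel-verified Lean document; each statement's English description precedes it below -/
import Mathlib

section
/- If A is a matrix that is a union of at least two n×n orthonormal bases, each partitioned into blocks of size n×r with r dividing n, then its worst-case block coherence satisfies μ(A) ≥ sqrt(r/n). -/
/-!
Pick two different bases `U`, `V`. The Gram matrix `Uᴴ V` is unitary, so its squared Frobenius
norm is `n = k r`. Split it into the `k²` blocks `U_iᴴ V_j` of size `r × r`: each has squared
Frobenius norm at most `r μ²`, hence `k r ≤ k² r μ²`, i.e. `μ² ≥ 1 / k = r / n`.
-/

open Matrix Finset Filter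

noncomputable def specNorm {α β : Type*} [Fintype α] [Fintype β] [DecidableEq β]
    (X : Matrix α β ℂ) : ℝ :=
  ‖LinearMap.toContinuousLinearMap (Matrix.toEuclideanLin X)‖

/-- The `i`-th size `n × r` column block of a matrix whose columns are indexed by
`Fin k × Fin r`. -/
def blockOf {n k r : ℕ} (P : Matrix (Fin n) (Fin k × Fin r) ℂ) (i : Fin k) :
    Matrix (Fin n) (Fin r) ℂ :=
  fun a b => P a (i, b)

/-- Squared Frobenius norm. -/
noncomputable def frobSq {α β : Type*} [Fintype α] [Fintype β] (X : Matrix α β ℂ) : ℝ :=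
  ∑ a, ∑ b, ‖X a b‖ ^ 2

lemma specNorm_nonneg {α β : Type*} [Fintype α] [Fintype β] [DecidableEq β]
    (X : Matrix α β ℂ) : 0 ≤ specNorm X := norm_nonneg _

lemma sum_norm_sq_le_specNorm_sq {α β : Type*} [Fintype α] [Fintype β] [DecidableEq β]
    (X : Matrix α β ℂ) (b : β) : ∑ a, ‖X a b‖ ^ 2 ≤ specNorm X ^ 2 := by
  have hcol : ‖toEuclideanLin X (EuclideanSpace.single b 1)‖ ^ 2 = ∑ a, ‖X a b‖ ^ 2 := by
    simp [EuclideanSpace.norm_sq_eq, Matrix.mulVec_single]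
  have hle : ‖toEuclideanLin X (EuclideanSpace.single b 1)‖ ≤ specNorm X := by
    simpa [specNorm] using (LinearMap.toContinuousLinearMap (toEuclideanLin X)).le_opNorm
      (EuclideanSpace.single b (1 : ℂ))
  rw [← hcol]
  gcongr

lemma frobSq_le_card_mul_specNorm_sq {α β : Type*} [Fintype α] [Fintype β] [DecidableEq β]
    (X : Matrix α β ℂ) : frobSq X ≤ Fintype.card β * specNorm X ^ 2 := by
  rw [frobSq, Finset.sum_comm, ← nsmul_eq_mul, ← Finset.card_univ, ← Finset.sum_const]
  exact Finset.sum_le_sum fun b _ => sum_norm_sq_le_specNorm_sq X b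

lemma frobSq_eq_re_trace {α β : Type*} [Fintype α] [Fintype β] (X : Matrix α β ℂ) :
    frobSq X = (Xᴴ * X).trace.re := by
  rw [frobSq, Finset.sum_comm]
  simp [Matrix.trace, Matrix.mul_apply, Complex.re_sum, Complex.sq_norm, Complex.normSq_apply]

lemma frobSq_eq_card_of_conjTranspose_mul_self_eq_one {α β : Type*} [Fintype α] [Fintype β]
    [DecidableEq β] {X : Matrix α β ℂ} (h : Xᴴ * X = 1) : frobSq X = Fintype.card β := by
  simp [frobSq_eq_re_trace, h]

lemma frobSq_eq_sum_frobSq_submatrix {ι α κ β : Type*} [Fintype ι] [Fintype α] [Fintype κ]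
    [Fintype β] (X : Matrix (ι × α) (κ × β) ℂ) :
    frobSq X = ∑ i, ∑ j, frobSq (X.submatrix (Prod.mk i) (Prod.mk j)) := by
  simp only [frobSq, Fintype.sum_prod_type, submatrix_apply]
  exact Finset.sum_congr rfl fun i _ => Finset.sum_comm

lemma frobSq_le_of_specNorm_submatrix_le {ι α κ β : Type*} [Fintype ι] [Fintype α] [Fintype κ]
    [Fintype β] [DecidableEq β] (X : Matrix (ι × α) (κ × β) ℂ) {μ : ℝ}
    (h : ∀ i j, specNorm (X.submatrix (Prod.mk i) (Prod.mk j)) ≤ μ) :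
    frobSq X ≤ Fintype.card ι * Fintype.card κ * (Fintype.card β * μ ^ 2) := by
  rw [frobSq_eq_sum_frobSq_submatrix]
  calc ∑ i, ∑ j, frobSq (X.submatrix (Prod.mk i) (Prod.mk j))
      ≤ ∑ _i : ι, ∑ _j : κ, (Fintype.card β * μ ^ 2) := by
        gcongr with i _ j _
        refine (frobSq_le_card_mul_specNorm_sq _).trans ?_
        gcongr
        · exact specNorm_nonneg _
        · exact h i j
    _ = _ := by simp [mul_assoc]

lemma conjTranspose_mul_self_conjTranspose_mul_eq_one {m n R : Type*} [Fintype m] [Fintype n]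
    [DecidableEq m] [DecidableEq n] [CommRing R] [StarRing R] (e : n ≃ m) {U V : Matrix m n R}
    (hU : Uᴴ * U = 1) (hV : Vᴴ * V = 1) : (Uᴴ * V)ᴴ * (Uᴴ * V) = 1 := by
  have hU' : U * Uᴴ = 1 := (mul_eq_one_comm_of_equiv e).mp hU
  rw [conjTranspose_mul, conjTranspose_conjTranspose, Matrix.mul_assoc, ← Matrix.mul_assoc U,
    hU', Matrix.one_mul, hV]

lemma submatrix_conjTranspose_mul_eq_blockOf {n k r : ℕ}
    (U V : Matrix (Fin n) (Fin k × Fin r) ℂ) (i j : Fin k) :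
    (Uᴴ * V).submatrix (Prod.mk i) (Prod.mk j) = (blockOf U i)ᴴ * blockOf V j := by
  ext a b
  simp [Matrix.mul_apply, blockOf]

lemma sqrt_div_le_of_mul_le {k r : ℕ} {μ : ℝ} (hμ : 0 ≤ μ)
    (h : (k * r : ℝ) ≤ k * k * (r * μ ^ 2)) : √((r : ℝ) / ((k * r : ℕ) : ℝ)) ≤ μ := by
  rw [Real.sqrt_le_left hμ]
  rcases (Nat.zero_le (k * r)).eq_or_lt with hkr | hkr
  · simp [← hkr, sq_nonneg]
  · have hkr' : (0 : ℝ) < k * r := by exact_mod_cast hkr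
    rw [Nat.cast_mul, div_le_iff₀ hkr']
    nlinarith

lemma sqrt_div_le_of_specNorm_blockOf_le {k r : ℕ} {U V : Matrix (Fin (k * r)) (Fin k × Fin r) ℂ}
    (hU : Uᴴ * U = 1) (hV : Vᴴ * V = 1) {μ : ℝ} (hμ : 0 ≤ μ)
    (h : ∀ i j, specNorm ((blockOf U i)ᴴ * blockOf V j) ≤ μ) :
    √((r : ℝ) / ((k * r : ℕ) : ℝ)) ≤ μ := by
  have hfrob : frobSq (Uᴴ * V) = k * r := by
    rw [frobSq_eq_card_of_conjTranspose_mul_self_eq_one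
      (conjTranspose_mul_self_conjTranspose_mul_eq_one finProdFinEquiv hU hV)]
    simp
  have hbound := frobSq_le_of_specNorm_submatrix_le (Uᴴ * V) (μ := μ) fun i j => by
    simpa only [submatrix_conjTranspose_mul_eq_blockOf] using h i j
  rw [hfrob, Fintype.card_fin, Fintype.card_fin] at hbound
  exact sqrt_div_le_of_mul_le hμ hbound

theorem stmt3_general (k r t : ℕ) (ht : 2 ≤ t)
    (A : Fin t → Matrix (Fin (k * r)) (Fin k × Fin r) ℂ)
    (hunit : ∀ ℓ, (A ℓ)ᴴ * A ℓ = 1)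
    (hne : (Finset.univ.filter
      (fun pr : (Fin t × Fin k) × (Fin t × Fin k) => pr.1 ≠ pr.2)).Nonempty) :
    Real.sqrt ((r : ℝ) / ((k * r : ℕ) : ℝ)) ≤
      (Finset.univ.filter
        (fun pr : (Fin t × Fin k) × (Fin t × Fin k) => pr.1 ≠ pr.2)).sup' hne
        (fun pr => specNorm ((blockOf (A pr.1.1) pr.1.2)ᴴ * blockOf (A pr.2.1) pr.2.2)) := by
  have hle := fun pr hpr => Finset.le_sup' (fun pr : (Fin t × Fin k) × (Fin t × Fin k) =>
    specNorm ((blockOf (A pr.1.1) pr.1.2)ᴴ * blockOf (A pr.2.1) pr.2.2))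
    (s := Finset.univ.filter fun pr => pr.1 ≠ pr.2) (b := pr) hpr
  let ℓ₀ : Fin t := ⟨0, by omega⟩
  let ℓ₁ : Fin t := ⟨1, by omega⟩
  exact sqrt_div_le_of_specNorm_blockOf_le (hunit ℓ₀) (hunit ℓ₁)
    ((specNorm_nonneg _).trans (hle _ hne.choose_spec))
    fun i j => hle ((ℓ₀, i), (ℓ₁, j)) (by simp [ℓ₀, ℓ₁, Fin.ext_iff])

/-- Lower bound sqrt(r/n) on the worst-case block coherence of a union of t ≥ 2
orthonormal bases of ℂ^n (n = k·r), each split into k column blocks of size n×r. -/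
theorem stmt3 (k r t : ℕ) (hk : 0 < k) (hr : 0 < r) (ht : 2 ≤ t)
    (A : Fin t → Matrix (Fin (k * r)) (Fin k × Fin r) ℂ)
    (hunit : ∀ ℓ, (A ℓ)ᴴ * A ℓ = 1)
    (hne : (Finset.univ.filter
      (fun pr : (Fin t × Fin k) × (Fin t × Fin k) => pr.1 ≠ pr.2)).Nonempty) :
    Real.sqrt ((r : ℝ) / ((k * r : ℕ) : ℝ)) ≤
      (Finset.univ.filter
        (fun pr : (Fin t × Fin k) × (Fin t × Fin k) => pr.1 ≠ pr.2)).sup' hne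
        (fun pr => specNorm ((blockOf (A pr.1.1) pr.1.2)ᴴ * blockOf (A pr.2.1) pr.2.2)) :=
  stmt3_general k r t ht A hunit hne
end

section
/- Let P = [P_1 ... P_t] where each P_ℓ ∈ ℂ^{k×k} is unitary, and suppose every pair of columns p_i, p_j of P taken from different unitary blocks satisfies |p_i* p_j| = sqrt(r/n) where n = kr. Let Q ∈ ℂ^{r×r} be unitary and A = P ⊗ Q. Then μ(A) = max_{i≠j} ‖A_i* A_j‖₂ = sqrt(r/n), where A_i = p_i ⊗ Q, achieving the union-of-orthobases lower bound. -/
/-! Each block product is `(p_i* p_j) • Q*Q = (p_i* p_j) • 1`, whose spectral norm is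
`|p_i* p_j|`. This vanishes for distinct columns of one unitary basis and equals `√(r/n)`
across bases, so the maximum over all pairs is `√(r/n)`, attained at the first columns of
the first two bases. -/

open Matrix Finset

/-- The Kronecker product `p ⊗ Q` of a column vector `p ∈ ℂ^k` with an `r × r`
matrix `Q`, viewed as a `(k·r) × r` matrix (rows indexed by `Fin k × Fin r`). -/
def kronBlock {k r : ℕ} (p : Fin k → ℂ) (Q : Matrix (Fin r) (Fin r) ℂ) :
    Matrix (Fin k × Fin r) (Fin r) ℂ :=
  fun st b => p st.1 * Q st.2 b

section SpecNorm

variable {α β : Type*} [Fintype α] [Fintype β] [DecidableEq β]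

lemma specNorm_smul (c : ℂ) (X : Matrix α β ℂ) : specNorm (c • X) = ‖c‖ * specNorm X := by
  rw [specNorm, _root_.map_smul, _root_.map_smul, norm_smul, specNorm]

lemma specNorm_one [Nonempty β] : specNorm (1 : Matrix β β ℂ) = 1 := by
  have hid : LinearMap.toContinuousLinearMap (Matrix.toEuclideanLin (1 : Matrix β β ℂ)) =
      ContinuousLinearMap.id ℂ (EuclideanSpace ℂ β) := by
    ext x i
    simp [Matrix.toEuclideanLin]
  rw [specNorm, hid, ContinuousLinearMap.norm_id]

end SpecNorm

lemma star_dotProduct_eq_zero_of_conjTranspose_mul_self_eq_one {m ι R : Type*} [Fintype m]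
    [DecidableEq ι] [CommSemiring R] [StarRing R] {p : ι → m → R}
    (hp : (Matrix.of (fun a c => p c a))ᴴ * Matrix.of (fun a c => p c a) = 1)
    {c c' : ι} (hcc' : c ≠ c') : star (p c) ⬝ᵥ p c' = 0 := by
  have h := congrFun (congrFun hp c) c'
  rwa [Matrix.mul_apply, Matrix.one_apply_ne hcc'] at h

lemma kronBlock_conjTranspose_mul {k r : ℕ} (p q : Fin k → ℂ) (Q : Matrix (Fin r) (Fin r) ℂ) :
    (kronBlock p Q)ᴴ * kronBlock q Q = (star p ⬝ᵥ q) • (Qᴴ * Q) := by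
  ext a b
  simp only [mul_apply, conjTranspose_apply, kronBlock, Matrix.smul_apply, dotProduct,
    smul_eq_mul, Pi.star_apply, star_mul']
  rw [Fintype.sum_prod_type, Finset.sum_mul_sum]
  exact Finset.sum_congr rfl fun s _ => Finset.sum_congr rfl fun u _ => by ring

lemma specNorm_kronBlock_conjTranspose_mul {k r : ℕ} (hr : 0 < r) (p q : Fin k → ℂ)
    {Q : Matrix (Fin r) (Fin r) ℂ} (hQ : Qᴴ * Q = 1) :
    specNorm ((kronBlock p Q)ᴴ * kronBlock q Q) = ‖star p ⬝ᵥ q‖ := by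
  have : Nonempty (Fin r) := ⟨⟨0, hr⟩⟩
  rw [kronBlock_conjTranspose_mul, hQ, specNorm_smul, specNorm_one, mul_one]

/-- Kronecker product construction 2: if P is a union of t ≥ 2 unitary k×k bases whose
columns p ℓ c satisfy |⟨p ℓ c, p ℓ' c'⟩| = sqrt(r/n) (n = k·r) whenever ℓ ≠ ℓ', and Q is
r×r unitary, then A = P ⊗ Q, with blocks A_(ℓ,c) = p ℓ c ⊗ Q, has worst-case block
coherence μ(A) = sqrt(r/n). -/
theorem stmt18 (k r t : ℕ) (hk : 0 < k) (hr : 0 < r) (ht : 2 ≤ t)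
    (p : Fin t → Fin k → (Fin k → ℂ))
    (Q : Matrix (Fin r) (Fin r) ℂ) (hQ : Qᴴ * Q = 1)
    (hbases : ∀ ℓ, (Matrix.of (fun a c => p ℓ c a) : Matrix (Fin k) (Fin k) ℂ)ᴴ *
        Matrix.of (fun a c => p ℓ c a) = 1)
    (hcross : ∀ ℓ ℓ' c c', ℓ ≠ ℓ' →
      ‖star (p ℓ c) ⬝ᵥ p ℓ' c'‖ = Real.sqrt ((r : ℝ) / ((k * r : ℕ) : ℝ)))
    (hne : (Finset.univ.filter
      (fun pr : (Fin t × Fin k) × (Fin t × Fin k) => pr.1 ≠ pr.2)).Nonempty) :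
    (Finset.univ.filter
      (fun pr : (Fin t × Fin k) × (Fin t × Fin k) => pr.1 ≠ pr.2)).sup' hne
      (fun pr => specNorm
        ((kronBlock (p pr.1.1 pr.1.2) Q)ᴴ * kronBlock (p pr.2.1 pr.2.2) Q)) =
      Real.sqrt ((r : ℝ) / ((k * r : ℕ) : ℝ)) := by
  simp only [specNorm_kronBlock_conjTranspose_mul hr _ _ hQ]
  apply le_antisymm
  · refine Finset.sup'_le _ _ fun ⟨⟨ℓ, c⟩, ⟨ℓ', c'⟩⟩ hmem => ?_
    obtain rfl | hℓ := eq_or_ne ℓ ℓ'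
    · have hc : c ≠ c' := fun h => (Finset.mem_filter.mp hmem).2 (by rw [h])
      rw [star_dotProduct_eq_zero_of_conjTranspose_mul_self_eq_one (hbases ℓ) hc, norm_zero]
      exact Real.sqrt_nonneg _
    · exact (hcross ℓ ℓ' c c' hℓ).le
  · have h01 : (⟨0, by omega⟩ : Fin t) ≠ ⟨1, by omega⟩ := by simp [Fin.ext_iff]
    have hmem : ((⟨⟨0, by omega⟩, ⟨0, hk⟩⟩, ⟨⟨1, by omega⟩, ⟨0, hk⟩⟩) :
        (Fin t × Fin k) × (Fin t × Fin k)) ∈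
        Finset.univ.filter (fun pr : (Fin t × Fin k) × (Fin t × Fin k) => pr.1 ≠ pr.2) := by
      simp [Prod.ext_iff, h01]
    exact Finset.le_sup'_of_le _ hmem (hcross _ _ _ _ h01).ge
end
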